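/- arXiv:1608.01129 — 6 statements merged into one kernel-verified Lean document; each statement's English description precedes it below -/
import Mathlib

section
/- The number of discrete bridges of length σ — i.e. sequences (b(0),...,b(σ)) of integers with b(0)=0, b(i+1)−b(i) ∈ {−1,0,1,2,...} for each i, and b(σ) ≤ 0 — equals the central binomial coefficient C(2σ, σ). -/
/-- A (discrete) bridge of length `σ`, encoded as a list of `σ+1` integer values:
`b 0 = 0`, each increment lies in `ℕ₀ ∪ {-1}` (i.e. is `≥ -1`), and the final value is `≤ 0`. -/
def IsBridge (σ : ℕ) (b : List ℤ) : Prop :=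
  b.length = σ + 1 ∧ b.getD 0 0 = 0 ∧
    (∀ i < σ, -1 ≤ b.getD (i + 1) 0 - b.getD i 0) ∧ b.getD σ 0 ≤ 0

open Finset

/-- Extension of `e : Fin σ → ℕ` to `ℕ` by zero. -/
private def eExt (σ : ℕ) (e : Fin σ → ℕ) (i : ℕ) : ℕ :=
  if h : i < σ then e ⟨i, h⟩ else 0

/-- The partial-sum sequence of increments `e i - 1`. -/
private def bseq (σ : ℕ) (e : Fin σ → ℕ) (j : ℕ) : ℤ :=
  (∑ i ∈ Finset.range j, (eExt σ e i : ℤ)) - j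

private lemma bseq_zero (σ : ℕ) (e : Fin σ → ℕ) : bseq σ e 0 = 0 := by
  simp [bseq]

private lemma bseq_succ (σ : ℕ) (e : Fin σ → ℕ) (j : ℕ) (hj : j < σ) :
    bseq σ e (j + 1) = bseq σ e j + e ⟨j, hj⟩ - 1 := by
  unfold bseq
  rw [Finset.sum_range_succ]
  rw [eExt, dif_pos hj]
  push_cast
  ring

private lemma sum_eExt_int (σ : ℕ) (e : Fin σ → ℕ) :
    ∑ i ∈ Finset.range σ, (eExt σ e i : ℤ) = ∑ i, (e i : ℤ) := by
  rw [Finset.sum_range fun i => ((eExt σ e i : ℤ))]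
  refine Finset.sum_congr rfl fun i _ => ?_
  simp [eExt, i.isLt]

private lemma getD_ofFn {n : ℕ} (f : Fin n → ℤ) (k : ℕ) (h : k < n) :
    (List.ofFn f).getD k 0 = f ⟨k, h⟩ := by
  rw [List.getD_eq_getElem _ _ (by simpa using h), List.getElem_ofFn]

private lemma bridge_key (σ : ℕ) (b : List ℤ) (h0 : b.getD 0 0 = 0)
    (hstep : ∀ i < σ, -1 ≤ b.getD (i + 1) 0 - b.getD i 0) :
    ∀ j ≤ σ, bseq σ (fun i => (b.getD (i + 1) 0 - b.getD i 0 + 1).toNat) j = b.getD j 0 := by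
  intro j hj
  induction j with
  | zero => rw [bseq_zero, h0]
  | succ j ih =>
    have hjσ : j < σ := hj
    rw [bseq_succ _ _ j hjσ, ih (le_of_lt hjσ)]
    have := hstep j hjσ
    have htn : ((b.getD (j + 1) 0 - b.getD j 0 + 1).toNat : ℤ)
        = b.getD (j + 1) 0 - b.getD j 0 + 1 := Int.toNat_of_nonneg (by omega)
    rw [htn]
    ring

/-- Bridges correspond to increment sequences `e : Fin σ → ℕ` (shifted by 1) with sum `≤ σ`. -/
noncomputable def bridgeEquiv (σ : ℕ) :
    {b : List ℤ // IsBridge σ b} ≃ {e : Fin σ → ℕ // ∑ i, e i ≤ σ} where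
  toFun b := ⟨fun i => (b.1.getD (i + 1) 0 - b.1.getD i 0 + 1).toNat, by
    obtain ⟨b, hlen, h0, hstep, hend⟩ := b
    show ∑ i : Fin σ, (b.getD ((i : ℕ) + 1) 0 - b.getD (i : ℕ) 0 + 1).toNat ≤ σ
    have h1 := bridge_key σ b h0 hstep σ le_rfl
    unfold bseq at h1
    rw [sum_eExt_int] at h1
    have h2 : (∑ i : Fin σ, ((b.getD ((i : ℕ) + 1) 0 - b.getD (i : ℕ) 0 + 1).toNat : ℤ))
        ≤ (σ : ℤ) := by omega
    have h3 : ((∑ i : Fin σ, (b.getD ((i : ℕ) + 1) 0 - b.getD (i : ℕ) 0 + 1).toNat : ℕ) : ℤ)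
        ≤ (σ : ℤ) := by push_cast; exact h2
    exact_mod_cast h3⟩
  invFun e := ⟨List.ofFn (fun j : Fin (σ + 1) => bseq σ e.1 j), by
    obtain ⟨e, he⟩ := e
    refine ⟨by simp, ?_, ?_, ?_⟩
    · rw [getD_ofFn _ 0 (by omega)]
      exact bseq_zero σ e
    · intro i hi
      rw [getD_ofFn _ (i + 1) (by omega), getD_ofFn _ i (by omega)]
      simp only [Fin.val_mk]
      rw [bseq_succ _ _ i hi]
      have : (0 : ℤ) ≤ (e ⟨i, hi⟩ : ℤ) := Int.natCast_nonneg _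
      omega
    · rw [getD_ofFn _ σ (by omega)]
      simp only [Fin.val_mk]
      unfold bseq
      rw [sum_eExt_int]
      have : ((∑ i, e i : ℕ) : ℤ) ≤ (σ : ℤ) := by exact_mod_cast he
      push_cast at this ⊢
      omega⟩
  left_inv := by
    rintro ⟨b, hb⟩
    obtain ⟨hlen, h0, hstep, hend⟩ := hb
    apply Subtype.ext
    show List.ofFn (fun j : Fin (σ + 1) =>
      bseq σ (fun i => (b.getD ((i : ℕ) + 1) 0 - b.getD (i : ℕ) 0 + 1).toNat) (j : ℕ)) = b
    apply List.ext_getElem (by simp [hlen])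
    intro n h1 h2
    have hn : n < σ + 1 := by simpa using h1
    simp only [List.getElem_ofFn]
    have := bridge_key σ b h0 hstep n (by omega)
    rw [this]
    exact List.getD_eq_getElem b 0 h2
  right_inv := by
    rintro ⟨e, he⟩
    apply Subtype.ext
    funext i
    show ((List.ofFn fun j : Fin (σ + 1) => bseq σ e j).getD ((i : ℕ) + 1) 0
      - (List.ofFn fun j : Fin (σ + 1) => bseq σ e j).getD (i : ℕ) 0 + 1).toNat = e i
    rw [getD_ofFn _ ((i : ℕ) + 1) (by omega), getD_ofFn _ (i : ℕ) (by omega)]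
    simp only [Fin.val_mk]
    have hi : (i : ℕ) < σ := i.isLt
    rw [bseq_succ _ _ i hi]
    have h1 : bseq σ e (i : ℕ) + ((e ⟨(i : ℕ), hi⟩ : ℕ) : ℤ) - 1 - bseq σ e (i : ℕ) + 1
        = ((e ⟨(i : ℕ), hi⟩ : ℕ) : ℤ) := by ring
    rw [h1, Int.toNat_natCast, Fin.eta]

/-- Adding a slack variable: sequences with sum `≤ σ` correspond to sequences of length `σ+1`
with sum exactly `σ`. -/
def slackEquiv (σ : ℕ) :
    {e : Fin σ → ℕ // ∑ i, e i ≤ σ} ≃ {P : Fin (σ + 1) → ℕ // ∑ i, P i = σ} where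
  toFun e := ⟨Fin.cons (σ - ∑ i, e.1 i) e.1, by
    rw [Fin.sum_cons]
    have := e.2
    omega⟩
  invFun P := ⟨fun i => P.1 i.succ, by
    show ∑ i : Fin σ, P.1 i.succ ≤ σ
    have := P.2
    rw [Fin.sum_univ_succ] at this
    omega⟩
  left_inv := by
    rintro ⟨e, he⟩
    apply Subtype.ext
    funext i
    simp
  right_inv := by
    rintro ⟨P, hP⟩
    apply Subtype.ext
    funext j
    induction j using Fin.cases with
    | zero =>
      show σ - (∑ i : Fin σ, P i.succ) = P 0
      rw [Fin.sum_univ_succ] at hP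
      omega
    | succ i => simp

/-- The number of bridges of length `σ` equals the central binomial coefficient `C(2σ, σ)`. -/
theorem card_bridges (σ : ℕ) (hσ : 0 < σ) :
    Nat.card {b : List ℤ // IsBridge σ b} = Nat.choose (2 * σ) σ := by
  rw [Nat.card_congr ((bridgeEquiv σ).trans (slackEquiv σ))]
  rw [Nat.card_congr (Sym.equivNatSumOfFintype (Fin (σ + 1)) σ).symm]
  rw [Nat.card_eq_fintype_card, Sym.card_sym_eq_choose]
  rw [Fintype.card_fin]
  congr 1
  omega
end

section
/- There is a bijection between the set 𝔅_σ of bridges of length σ and the set of sequences in {−1,+1}^{2σ} containing exactly σ entries equal to −1, obtained by mapping a bridge b to the sequence consisting of (b(0)−b(σ)) entries +1, then −1, then (b(1)−b(0)+1) entries +1, then −1, ..., ending with (b(σ)−b(σ−1)+1) entries +1. -/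
/-- The map sending a bridge `b` to the `±1`-sequence consisting of `b 0 - b σ` entries `+1`,
then, for each `i = 1, ..., σ`, an entry `-1` followed by `b i - b (i-1) + 1` entries `+1`. -/
def bridgeToSeq (σ : ℕ) (b : List ℤ) : List ℤ :=
  List.replicate (b.getD 0 0 - b.getD σ 0).toNat 1 ++
    (List.range σ).flatMap fun i =>
      (-1 : ℤ) :: List.replicate (b.getD (i + 1) 0 - b.getD i 0 + 1).toNat 1

/-!
A `±1` sequence with `σ` entries `-1` is determined by the lengths `k₀, …, k_σ` of the `σ + 1`
(possibly empty) runs of `+1` that these entries separate, and the run lengths form an arbitrary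
list of `σ + 1` naturals summing to the number of `+1`s, here `σ`. The map factors through the run
lengths `k₀ = -b(σ)`, `kᵢ = b(i) - b(i-1) + 1` of a bridge `b`: they are natural numbers because
`b` is a bridge, they sum to `σ` by telescoping, and `b(i) = k₁ + ⋯ + kᵢ - i` recovers `b`.
-/

namespace List

variable {α : Type*}

def joinRuns (a s : α) : List ℕ → List α
  | [] => []
  | k :: ks => replicate k a ++ ks.flatMap fun m => s :: replicate m a

def runLengths [BEq α] (s : α) (l : List α) : List ℕ := (l.splitOn s).map length

theorem joinRuns_cons_cons (a s : α) (k m : ℕ) (ks : List ℕ) :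
    joinRuns a s (k :: m :: ks) = replicate k a ++ s :: joinRuns a s (m :: ks) := by
  simp [joinRuns]

theorem joinRuns_eq_intercalate (a s : α) (ks : List ℕ) :
    joinRuns a s ks = [s].intercalate (ks.map (replicate · a)) := by
  induction ks with
  | nil => rfl
  | cons k ks ih =>
    cases ks with
    | nil => simp [joinRuns]
    | cons m ks => rw [joinRuns_cons_cons, ih]; simp

theorem mem_joinRuns {a s x : α} {ks : List ℕ} (hx : x ∈ joinRuns a s ks) : x = a ∨ x = s := by
  cases ks with
  | nil => simp [joinRuns] at hx
  | cons k ks =>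
    simp only [joinRuns, mem_append, mem_replicate, mem_flatMap, mem_cons] at hx
    rcases hx with ⟨-, hx⟩ | ⟨m, -, hx | ⟨-, hx⟩⟩ <;> simp [hx]

theorem length_joinRuns (a s : α) (ks : List ℕ) :
    (joinRuns a s ks).length = ks.sum + (ks.length - 1) := by
  cases ks with
  | nil => rfl
  | cons k ks => simp [joinRuns, length_flatMap, sum_map_add]; omega

theorem count_joinRuns [BEq α] [LawfulBEq α] {a s : α} (h : a ≠ s) (ks : List ℕ) :
    (joinRuns a s ks).count s = ks.length - 1 := by
  cases ks with
  | nil => rfl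
  | cons k ks => simp [joinRuns, count_flatMap, count_replicate, h, Function.comp_def]

variable [BEq α] [LawfulBEq α]

theorem runLengths_joinRuns {a s : α} (h : a ≠ s) {ks : List ℕ} (hks : ks ≠ []) :
    runLengths s (joinRuns a s ks) = ks := by
  have hs : ∀ r ∈ ks.map (replicate · a), s ∉ r := by
    simp only [mem_map]
    rintro _ ⟨k, -, rfl⟩ hk
    exact h (eq_of_mem_replicate hk).symm
  rw [runLengths, joinRuns_eq_intercalate, splitOn_intercalate s hs (by simpa using hks)]
  simp [Function.comp_def]

theorem eq_of_mem_of_mem_splitOn {a s : α} {l : List α} (hl : ∀ x ∈ l, x = a ∨ x = s) :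
    ∀ r ∈ l.splitOn s, ∀ x ∈ r, x = a := by
  induction l with
  | nil => simp
  | cons y l ih =>
    have ih := ih fun x hx => hl x (mem_cons_of_mem y hx)
    rw [splitOn_cons_eq_if_modifyHead]
    split_ifs with hy
    · simpa using ih
    · obtain ⟨r₀, rs, hrs⟩ := exists_cons_of_ne_nil (splitOn_ne_nil s l)
      rw [hrs] at ih ⊢
      have hya : y = a := (hl y mem_cons_self).resolve_right (by simpa using hy)
      simp only [modifyHead_cons, forall_mem_cons] at ih ⊢
      exact ⟨⟨hya, ih.1⟩, ih.2⟩

theorem joinRuns_runLengths {a s : α} {l : List α} (hl : ∀ x ∈ l, x = a ∨ x = s) :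
    joinRuns a s (runLengths s l) = l := by
  have hrep : ∀ r ∈ l.splitOn s, replicate r.length a = r := fun r hr =>
    (eq_replicate_iff.2 ⟨rfl, eq_of_mem_of_mem_splitOn hl r hr⟩).symm
  rw [runLengths, joinRuns_eq_intercalate, map_map]
  conv_rhs => rw [← intercalate_splitOn (xs := l) s]
  congr 1
  exact map_congr_left hrep |>.trans (map_id _)

theorem joinRuns_bijOn {a s : α} (h : a ≠ s) (m n : ℕ) :
    Set.BijOn (joinRuns a s) {ks | ks.length = n + 1 ∧ ks.sum = m}
      {l | l.length = m + n ∧ (∀ x ∈ l, x = a ∨ x = s) ∧ l.count s = n} := by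
  refine Set.InvOn.bijOn (f' := runLengths s) ⟨?_, ?_⟩ ?_ ?_
  · rintro ks ⟨hlen, -⟩
    exact runLengths_joinRuns h (ne_nil_of_length_eq_add_one hlen)
  · rintro l ⟨-, hl, -⟩
    exact joinRuns_runLengths hl
  · rintro ks ⟨hlen, hsum⟩
    refine ⟨?_, fun x => mem_joinRuns, ?_⟩
    · simp [length_joinRuns, hlen, hsum]
    · simp [count_joinRuns h, hlen]
  · rintro l ⟨hlen, hl, hcount⟩
    have hne : runLengths s l ≠ [] := by simp [runLengths]
    have hlen' := length_joinRuns a s (runLengths s l)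
    have hcount' := count_joinRuns h (runLengths s l)
    rw [joinRuns_runLengths hl] at hlen' hcount'
    have := length_pos_iff.2 hne
    constructor <;> omega

end List

def runsOfBridge (σ : ℕ) (b : List ℤ) : List ℕ :=
  (b.getD 0 0 - b.getD σ 0).toNat ::
    (List.range σ).map fun i => (b.getD (i + 1) 0 - b.getD i 0 + 1).toNat

def bridgeOfRuns (σ : ℕ) (ks : List ℕ) : List ℤ :=
  (List.range (σ + 1)).map fun i => ((ks.tail.take i).sum : ℤ) - i

theorem length_runsOfBridge (σ : ℕ) (b : List ℤ) : (runsOfBridge σ b).length = σ + 1 := by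
  simp [runsOfBridge]

namespace IsBridge

variable {σ : ℕ} {b : List ℤ}

theorem sum_take_runsOfBridge (hb : IsBridge σ b) {i : ℕ} (hi : i ≤ σ) :
    (((runsOfBridge σ b).tail.take i).sum : ℤ) = b.getD i 0 + i := by
  obtain ⟨-, hb₀, hstep, -⟩ := hb
  induction i with
  | zero => rw [hb₀]; simp
  | succ i ih =>
    have hlt : i < (runsOfBridge σ b).tail.length := by simp [runsOfBridge]; omega
    have hrun : (runsOfBridge σ b).tail[i] = (b.getD (i + 1) 0 - b.getD i 0 + 1).toNat := by
      simp only [runsOfBridge, List.tail_cons, List.getElem_map, List.getElem_range]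
    rw [List.sum_take_succ _ i hlt, Nat.cast_add, ih (by omega), hrun,
      Int.toNat_of_nonneg (by linarith [hstep i hi])]
    push_cast
    ring

theorem sum_runsOfBridge (hb : IsBridge σ b) : (runsOfBridge σ b).sum = σ := by
  have htail := hb.sum_take_runsOfBridge le_rfl
  rw [List.take_of_length_le (by simp [runsOfBridge])] at htail
  rw [← Nat.cast_inj (R := ℤ), runsOfBridge, List.sum_cons, Nat.cast_add]
  rw [runsOfBridge, List.tail_cons] at htail
  rw [htail, hb.2.1, Int.toNat_of_nonneg (by linarith [hb.2.2.2])]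
  ring

theorem bridgeOfRuns_runsOfBridge (hb : IsBridge σ b) :
    bridgeOfRuns σ (runsOfBridge σ b) = b := by
  refine List.ext_getElem (by simp [bridgeOfRuns, hb.1]) fun i h₁ h₂ => ?_
  have hi : i ≤ σ := by simp [bridgeOfRuns] at h₁; omega
  simp only [bridgeOfRuns, List.getElem_map, List.getElem_range]
  rw [hb.sum_take_runsOfBridge hi, List.getD_eq_getElem _ _ h₂]
  ring

end IsBridge

theorem getD_bridgeOfRuns (σ : ℕ) (ks : List ℕ) {i : ℕ} (hi : i ≤ σ) :
    (bridgeOfRuns σ ks).getD i 0 = ((ks.tail.take i).sum : ℤ) - i := by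
  rw [bridgeOfRuns, List.getD_eq_getElem _ _ (by simp; omega)]
  simp only [List.getElem_map, List.getElem_range]

theorem getD_bridgeOfRuns_zero (σ : ℕ) (ks : List ℕ) : (bridgeOfRuns σ ks).getD 0 0 = 0 := by
  rw [getD_bridgeOfRuns σ ks (Nat.zero_le σ)]
  simp

theorem getD_bridgeOfRuns_succ_sub {σ : ℕ} {ks : List ℕ} {i : ℕ} (hi : i < σ)
    (hks : i < ks.tail.length) :
    (bridgeOfRuns σ ks).getD (i + 1) 0 - (bridgeOfRuns σ ks).getD i 0 = ks.tail[i] - 1 := by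
  rw [getD_bridgeOfRuns σ ks hi, getD_bridgeOfRuns σ ks hi.le, List.sum_take_succ _ i hks]
  push_cast
  ring

theorem getD_bridgeOfRuns_last {σ k : ℕ} {ks : List ℕ} (hlen : ks.length = σ) :
    (bridgeOfRuns σ (k :: ks)).getD σ 0 = ks.sum - σ := by
  rw [getD_bridgeOfRuns σ _ le_rfl, List.tail_cons, List.take_of_length_le hlen.le]

theorem isBridge_bridgeOfRuns {σ : ℕ} {ks : List ℕ} (hlen : ks.length = σ + 1)
    (hsum : ks.sum = σ) : IsBridge σ (bridgeOfRuns σ ks) := by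
  obtain ⟨k, ks, rfl⟩ := List.exists_cons_of_length_eq_add_one hlen
  rw [List.length_cons, Nat.add_right_cancel_iff] at hlen
  rw [List.sum_cons] at hsum
  refine ⟨by simp [bridgeOfRuns], getD_bridgeOfRuns_zero σ _, ?_, ?_⟩
  · intro i hi
    rw [getD_bridgeOfRuns_succ_sub hi (by simpa [hlen] using hi)]
    omega
  · rw [getD_bridgeOfRuns_last hlen]
    omega

theorem runsOfBridge_bridgeOfRuns {σ : ℕ} {ks : List ℕ} (hlen : ks.length = σ + 1)
    (hsum : ks.sum = σ) : runsOfBridge σ (bridgeOfRuns σ ks) = ks := by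
  obtain ⟨k, ks, rfl⟩ := List.exists_cons_of_length_eq_add_one hlen
  rw [List.length_cons, Nat.add_right_cancel_iff] at hlen
  rw [List.sum_cons] at hsum
  rw [runsOfBridge, getD_bridgeOfRuns_zero, getD_bridgeOfRuns_last hlen]
  congr 1
  · omega
  · refine List.ext_getElem (by simp [hlen]) fun i h₁ h₂ => ?_
    have hi : i < σ := by simpa using h₁
    simp only [List.getElem_map, List.getElem_range]
    rw [getD_bridgeOfRuns_succ_sub hi (by simpa [hlen] using hi)]
    simp

theorem runsOfBridge_bijOn (σ : ℕ) :
    Set.BijOn (runsOfBridge σ) {b | IsBridge σ b} {ks | ks.length = σ + 1 ∧ ks.sum = σ} :=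
  Set.InvOn.bijOn (f' := bridgeOfRuns σ)
    ⟨fun _ hb => hb.bridgeOfRuns_runsOfBridge,
      fun _ hks => runsOfBridge_bridgeOfRuns hks.1 hks.2⟩
    (fun b hb => ⟨length_runsOfBridge σ b, hb.sum_runsOfBridge⟩)
    (fun _ hks => isBridge_bridgeOfRuns hks.1 hks.2)

theorem bridgeToSeq_eq_joinRuns (σ : ℕ) (b : List ℤ) :
    bridgeToSeq σ b = List.joinRuns 1 (-1) (runsOfBridge σ b) := by
  rw [bridgeToSeq, runsOfBridge, List.joinRuns, List.flatMap_map]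

theorem bridgeToSeq_bijOn_general (σ : ℕ) :
    Set.BijOn (bridgeToSeq σ) {b : List ℤ | IsBridge σ b}
      {l : List ℤ | l.length = 2 * σ ∧ (∀ x ∈ l, x = 1 ∨ x = -1) ∧ l.count (-1) = σ} := by
  rw [two_mul]
  exact ((List.joinRuns_bijOn (by norm_num) σ σ).comp (runsOfBridge_bijOn σ)).congr
    fun b _ => (bridgeToSeq_eq_joinRuns σ b).symm

/-- `bridgeToSeq` is a bijection from the set of bridges of length `σ` onto the set of
sequences in `{-1,+1}^{2σ}` containing exactly `σ` entries equal to `-1`. -/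
theorem bridgeToSeq_bijOn (σ : ℕ) (hσ : 0 < σ) :
    Set.BijOn (bridgeToSeq σ) {b : List ℤ | IsBridge σ b}
      {l : List ℤ | l.length = 2 * σ ∧ (∀ x ∈ l, x = 1 ∨ x = -1) ∧ l.count (-1) = σ} :=
  bridgeToSeq_bijOn_general σ
end

section
/- If b is chosen uniformly at random from the set 𝔅_σ of bridges of length σ, then for every integer k with 0 ≤ k ≤ σ, P(b(σ) = −k) = (1/2) · (2σ−k−1)!/(2σ−1)! · σ!/(σ−k)!, and this probability is at most 2^{−k}. -/
open Finset

namespace BridgeAux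

/-- increments of `f`, extended to `ℕ`. -/
def F (σ : ℕ) (f : Fin σ → ℕ) : ℕ → ℤ := fun j => if h : j < σ then (f ⟨j, h⟩ : ℤ) - 1 else 0

def listOf (σ : ℕ) (f : Fin σ → ℕ) : List ℤ :=
  List.ofFn (fun i : Fin (σ + 1) => ∑ j ∈ Finset.range i, F σ f j)

def funOf (σ : ℕ) (b : List ℤ) : Fin σ → ℕ :=
  fun i => (b.getD (i + 1) 0 - b.getD i 0 + 1).toNat

lemma listOf_length (σ : ℕ) (f : Fin σ → ℕ) : (listOf σ f).length = σ + 1 := by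
  simp [listOf]

lemma listOf_getD (σ : ℕ) (f : Fin σ → ℕ) {i : ℕ} (hi : i ≤ σ) :
    (listOf σ f).getD i 0 = ∑ j ∈ Finset.range i, F σ f j := by
  have h : i < (listOf σ f).length := by rw [listOf_length]; omega
  rw [List.getD_eq_getElem _ 0 h]
  simp only [listOf, List.getElem_ofFn]

lemma sum_F (σ : ℕ) (f : Fin σ → ℕ) :
    ∑ j ∈ Finset.range σ, F σ f j = (∑ i, (f i : ℤ)) - σ := by
  rw [← Fin.sum_univ_eq_sum_range (fun j => F σ f j) σ]
  have : ∀ i : Fin σ, F σ f i = (f i : ℤ) - 1 := by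
    intro i; simp [F, i.isLt]
  rw [Finset.sum_congr rfl fun i _ => this i, Finset.sum_sub_distrib]
  simp [mul_comm]

lemma listOf_endpoint (σ : ℕ) (f : Fin σ → ℕ) :
    (listOf σ f).getD σ 0 = (∑ i, (f i : ℤ)) - σ := by
  rw [listOf_getD σ f le_rfl, sum_F]

lemma listOf_isBridge (σ : ℕ) (f : Fin σ → ℕ) (h : ∑ i, f i ≤ σ) :
    IsBridge σ (listOf σ f) := by
  refine ⟨listOf_length σ f, by rw [listOf_getD σ f (Nat.zero_le σ)]; simp, ?_, ?_⟩
  · intro i hi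
    rw [listOf_getD σ f hi, listOf_getD σ f (by omega), Finset.sum_range_succ,
      add_sub_cancel_left, F, dif_pos hi]
    have : (0 : ℤ) ≤ (f ⟨i, hi⟩ : ℤ) := Int.natCast_nonneg _
    linarith
  · rw [listOf_endpoint]
    have : ((∑ i, f i : ℕ) : ℤ) ≤ (σ : ℤ) := by exact_mod_cast h
    push_cast at this
    linarith

lemma telescope (σ : ℕ) (b : List ℤ) (hb : IsBridge σ b) :
    ∀ i, i ≤ σ → b.getD i 0 = ∑ j ∈ Finset.range i, F σ (funOf σ b) j := by
  intro i
  induction i with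
  | zero => intro _; simpa using hb.2.1
  | succ i ih =>
    intro hi
    have hi' : i < σ := hi
    rw [Finset.sum_range_succ, ← ih (by omega), F, dif_pos hi']
    have hd : (-1 : ℤ) ≤ b.getD (i + 1) 0 - b.getD i 0 := hb.2.2.1 i hi'
    have : ((funOf σ b ⟨i, hi'⟩ : ℕ) : ℤ) = b.getD (i + 1) 0 - b.getD i 0 + 1 := by
      simp only [funOf]
      exact Int.toNat_of_nonneg (by linarith)
    rw [this]; ring

lemma funOf_listOf (σ : ℕ) (f : Fin σ → ℕ) : funOf σ (listOf σ f) = f := by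
  funext i
  have hi : (i : ℕ) < σ := i.isLt
  simp only [funOf]
  rw [listOf_getD σ f (by omega), listOf_getD σ f (by omega : (i : ℕ) ≤ σ),
    Finset.sum_range_succ, add_sub_cancel_left, F, dif_pos hi]
  simp

lemma listOf_funOf (σ : ℕ) (b : List ℤ) (hb : IsBridge σ b) : listOf σ (funOf σ b) = b := by
  apply List.ext_getElem
  · rw [listOf_length, hb.1]
  · intro i h1 h2
    have hi : i ≤ σ := by rw [hb.1] at h2; omega
    rw [← List.getD_eq_getElem _ 0 h1, ← List.getD_eq_getElem _ 0 h2,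
      listOf_getD σ _ hi, telescope σ b hb i hi]

lemma endpoint_eq (σ : ℕ) (b : List ℤ) (hb : IsBridge σ b) :
    b.getD σ 0 = (∑ i, (funOf σ b i : ℤ)) - σ := by
  rw [telescope σ b hb σ le_rfl, sum_F]

lemma sum_funOf_le (σ : ℕ) (b : List ℤ) (hb : IsBridge σ b) :
    ∑ i, funOf σ b i ≤ σ := by
  have h := hb.2.2.2
  rw [endpoint_eq σ b hb] at h
  have : ((∑ i, funOf σ b i : ℕ) : ℤ) ≤ (σ : ℤ) := by push_cast; linarith
  exact_mod_cast this

/-- bridges of length `σ` are equivalent to `σ`-tuples of naturals with sum `≤ σ`. -/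
noncomputable def equivTotal (σ : ℕ) :
    {b : List ℤ // IsBridge σ b} ≃ {f : Fin σ → ℕ // ∑ i, f i ≤ σ} where
  toFun b := ⟨funOf σ b.1, sum_funOf_le σ b.1 b.2⟩
  invFun f := ⟨listOf σ f.1, listOf_isBridge σ f.1 f.2⟩
  left_inv b := Subtype.ext (listOf_funOf σ b.1 b.2)
  right_inv f := Subtype.ext (funOf_listOf σ f.1)

noncomputable def equivEnd (σ k : ℕ) (hk : k ≤ σ) :
    {b : List ℤ // IsBridge σ b ∧ b.getD σ 0 = -(k : ℤ)} ≃
      {f : Fin σ → ℕ // ∑ i, f i = σ - k} where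
  toFun b := ⟨funOf σ b.1, by
    have hb := b.2.1
    have he := b.2.2
    rw [endpoint_eq σ b.1 hb] at he
    have hcast : ((∑ i, funOf σ b.1 i : ℕ) : ℤ) = ∑ i, (funOf σ b.1 i : ℤ) := by
      push_cast; rfl
    omega⟩
  invFun f := ⟨listOf σ f.1, by
    have hf := f.2
    have hcast : ((∑ i, f.1 i : ℕ) : ℤ) = ∑ i, (f.1 i : ℤ) := by push_cast; rfl
    refine ⟨listOf_isBridge σ f.1 (by omega), ?_⟩
    rw [listOf_endpoint]
    omega⟩
  left_inv b := Subtype.ext (listOf_funOf σ b.1 b.2.1)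
  right_inv f := Subtype.ext (funOf_listOf σ f.1)

lemma card_sum_eq (m n : ℕ) :
    Nat.card {f : Fin m → ℕ // ∑ i, f i = n} = (m + n - 1).choose n := by
  rw [← Nat.card_congr (Sym.equivNatSumOfFintype (Fin m) n), Nat.card_eq_fintype_card,
    Sym.card_sym_eq_choose, Fintype.card_fin]

noncomputable def slackEquiv (σ : ℕ) :
    {f : Fin σ → ℕ // ∑ i, f i ≤ σ} ≃ {g : Fin (σ + 1) → ℕ // ∑ i, g i = σ} where
  toFun f := ⟨Fin.cons (σ - ∑ i, f.1 i) f.1, by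
    rw [Fin.sum_cons]; have := f.2; omega⟩
  invFun g := ⟨Fin.tail g.1, by
    have := g.2; rw [Fin.sum_univ_succ] at this
    have h2 : ∑ i : Fin σ, Fin.tail g.1 i = ∑ i : Fin σ, g.1 i.succ := rfl
    omega⟩
  left_inv f := by
    apply Subtype.ext
    funext i
    show (Fin.cons (σ - ∑ i, f.1 i) f.1 : Fin (σ + 1) → ℕ) i.succ = f.1 i
    rw [Fin.cons_succ]
  right_inv g := by
    apply Subtype.ext
    have hg := g.2
    rw [Fin.sum_univ_succ] at hg
    have h2 : ∑ i : Fin σ, Fin.tail g.1 i = ∑ i : Fin σ, g.1 i.succ := rfl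
    funext x
    induction x using Fin.cases with
    | zero =>
      show (Fin.cons (σ - ∑ i, Fin.tail g.1 i) (Fin.tail g.1) : Fin (σ + 1) → ℕ) 0 = g.1 0
      rw [Fin.cons_zero]
      omega
    | succ i =>
      show (Fin.cons (σ - ∑ i, Fin.tail g.1 i) (Fin.tail g.1) : Fin (σ + 1) → ℕ) i.succ = g.1 i.succ
      rw [Fin.cons_succ]
      rfl

lemma card_end (σ k : ℕ) (hk : k ≤ σ) :
    Nat.card {b : List ℤ // IsBridge σ b ∧ b.getD σ 0 = -(k : ℤ)}
      = (2 * σ - k - 1).choose (σ - k) := by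
  rw [Nat.card_congr (equivEnd σ k hk), card_sum_eq]
  congr 1
  omega

lemma card_total (σ : ℕ) (hσ : 0 < σ) :
    Nat.card {b : List ℤ // IsBridge σ b} = (2 * σ).choose σ := by
  rw [Nat.card_congr ((equivTotal σ).trans (slackEquiv σ)), card_sum_eq]
  congr 1
  omega

/-- choose is monotone towards the middle -/
lemma choose_mono_mid (n : ℕ) : ∀ {a b : ℕ}, a ≤ b → b ≤ n / 2 → n.choose a ≤ n.choose b := by
  intro a b h
  induction b, h using Nat.le_induction with
  | base => intro _; exact le_rfl
  | succ b hab ih =>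
    intro hb
    exact le_trans (ih (by omega)) (Nat.choose_le_succ_of_lt_half_left (by omega))

lemma choose_le_choose_of_add_le {n a b : ℕ} (hab : a ≤ b) (h : a + b ≤ n) :
    n.choose a ≤ n.choose b := by
  rcases le_or_gt b (n / 2) with hb | hb
  · exact choose_mono_mid n hab hb
  · have hbn : b ≤ n := by omega
    rw [← Nat.choose_symm hbn]
    exact choose_mono_mid n (by omega) (by omega)

/-- the key inequality `2^k · C(2σ-k-1, σ-k) ≤ C(2σ, σ)` -/
lemma key_ineq (σ : ℕ) (hσ : 0 < σ) : ∀ k, k ≤ σ →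
    2 ^ k * (2 * σ - k - 1).choose (σ - k) ≤ (2 * σ).choose σ
  | 0, _ => by simpa using Nat.choose_le_choose σ (by omega : 2 * σ - 0 - 1 ≤ 2 * σ)
  | 1, h => by
    have h1 : (2 * σ).choose σ = (2 * σ - 1).choose (σ - 1) + (2 * σ - 1).choose σ := by
      have e1 : 2 * σ = (2 * σ - 1) + 1 := by omega
      have e2 : σ = (σ - 1) + 1 := by omega
      rw [e1, e2, Nat.choose_succ_succ']
      congr 2 <;> omega
    have h2 : (2 * σ - 1).choose σ = (2 * σ - 1).choose (σ - 1) :=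
      Nat.choose_symm_of_eq_add (by omega)
    have h3 : (2 * σ - 1 - 1).choose (σ - 1) ≤ (2 * σ - 1).choose (σ - 1) :=
      Nat.choose_le_choose _ (by omega)
    calc 2 ^ 1 * (2 * σ - 1 - 1).choose (σ - 1)
        = (2 * σ - 1 - 1).choose (σ - 1) + (2 * σ - 1 - 1).choose (σ - 1) := by ring
      _ ≤ (2 * σ - 1).choose (σ - 1) + (2 * σ - 1).choose σ := by
          rw [h2]; exact Nat.add_le_add h3 h3
      _ = (2 * σ).choose σ := h1.symm
  | (j + 2), h => by
    have ih := key_ineq σ hσ (j + 1) (by omega)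
    have step : 2 * (2 * σ - (j + 2) - 1).choose (σ - (j + 2))
        ≤ (2 * σ - (j + 1) - 1).choose (σ - (j + 1)) := by
      set n := 2 * σ - j - 3 with hn
      have e1 : 2 * σ - (j + 2) - 1 = n := by omega
      have e2 : 2 * σ - (j + 1) - 1 = n + 1 := by omega
      have e3 : σ - (j + 1) = (σ - (j + 2)) + 1 := by omega
      rw [e1, e2, e3, Nat.choose_succ_succ']
      have : n.choose (σ - (j + 2)) ≤ n.choose ((σ - (j + 2)) + 1) :=
        choose_le_choose_of_add_le (by omega) (by omega)
      omega
    calc 2 ^ (j + 2) * (2 * σ - (j + 2) - 1).choose (σ - (j + 2))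
        = 2 ^ (j + 1) * (2 * (2 * σ - (j + 2) - 1).choose (σ - (j + 2))) := by ring
      _ ≤ 2 ^ (j + 1) * (2 * σ - (j + 1) - 1).choose (σ - (j + 1)) :=
          Nat.mul_le_mul_left _ step
      _ ≤ (2 * σ).choose σ := ih

end BridgeAux

/-- For a uniformly random bridge `b` of length `σ` and `0 ≤ k ≤ σ`, the probability that
`b σ = -k` equals `(1/2) (2σ-k-1)!/(2σ-1)! · σ!/(σ-k)!`, and is at most `2^{-k}`. -/
theorem prob_bridge_endpoint (σ k : ℕ) (hσ : 0 < σ) (hk : k ≤ σ) :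
    (Nat.card {b : List ℤ // IsBridge σ b ∧ b.getD σ 0 = -(k : ℤ)} : ℝ) /
        (Nat.card {b : List ℤ // IsBridge σ b} : ℝ)
      = 1 / 2 * (Nat.factorial (2 * σ - k - 1) : ℝ) / (Nat.factorial (2 * σ - 1) : ℝ)
          * (Nat.factorial σ : ℝ) / (Nat.factorial (σ - k) : ℝ) ∧
    (Nat.card {b : List ℤ // IsBridge σ b ∧ b.getD σ 0 = -(k : ℤ)} : ℝ) /
        (Nat.card {b : List ℤ // IsBridge σ b} : ℝ) ≤ (2 : ℝ)⁻¹ ^ k := by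
  rw [BridgeAux.card_end σ k hk, BridgeAux.card_total σ hσ]
  constructor
  · -- equality
    have hA : ((2 * σ - k - 1).choose (σ - k) : ℝ)
        = (2 * σ - k - 1).factorial / ((σ - k).factorial * (σ - 1).factorial) := by
      rw [Nat.cast_choose ℝ (by omega : σ - k ≤ 2 * σ - k - 1),
        show 2 * σ - k - 1 - (σ - k) = σ - 1 by omega]
    have hT : (((2 * σ).choose σ : ℕ) : ℝ)
        = (2 * σ).factorial / (σ.factorial * σ.factorial) := by
      rw [Nat.cast_choose ℝ (by omega : σ ≤ 2 * σ), show 2 * σ - σ = σ by omega]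
    have hfac1 : ((2 * σ).factorial : ℝ) = (2 * σ) * (2 * σ - 1).factorial := by
      have h := Nat.factorial_succ (2 * σ - 1)
      rw [show 2 * σ - 1 + 1 = 2 * σ by omega] at h
      rw [h]
      push_cast
      ring
    have hfac2 : (σ.factorial : ℝ) = σ * (σ - 1).factorial := by
      have h := Nat.factorial_succ (σ - 1)
      rw [show σ - 1 + 1 = σ by omega] at h
      rw [h]
      push_cast
      ring
    rw [hA, hT, hfac1, hfac2]
    have p1 : ((2 * σ - k - 1).factorial : ℝ) ≠ 0 := Nat.cast_ne_zero.2 (Nat.factorial_ne_zero _)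
    have p2 : ((σ - k).factorial : ℝ) ≠ 0 := Nat.cast_ne_zero.2 (Nat.factorial_ne_zero _)
    have p3 : ((σ - 1).factorial : ℝ) ≠ 0 := Nat.cast_ne_zero.2 (Nat.factorial_ne_zero _)
    have p4 : ((2 * σ - 1).factorial : ℝ) ≠ 0 := Nat.cast_ne_zero.2 (Nat.factorial_ne_zero _)
    have p5 : (σ : ℝ) ≠ 0 := Nat.cast_ne_zero.2 (by omega)
    have p6 : ((2 * σ : ℕ) : ℝ) ≠ 0 := Nat.cast_ne_zero.2 (by omega)
    field_simp
  · -- inequality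
    have hT : (0 : ℝ) < ((2 * σ).choose σ : ℝ) := by
      exact_mod_cast Nat.choose_pos (by omega : σ ≤ 2 * σ)
    rw [div_le_iff₀ hT]
    have key := BridgeAux.key_ineq σ hσ k hk
    have : ((2 * σ - k - 1).choose (σ - k) : ℝ) * 2 ^ k ≤ ((2 * σ).choose σ : ℝ) := by
      exact_mod_cast (by linarith [key] : (2 * σ - k - 1).choose (σ - k) * 2 ^ k ≤ (2 * σ).choose σ)
    calc ((2 * σ - k - 1).choose (σ - k) : ℝ)
        = ((2 * σ - k - 1).choose (σ - k) : ℝ) * 2 ^ k * (2⁻¹) ^ k := by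
          rw [mul_assoc, ← mul_pow]; norm_num
      _ ≤ ((2 * σ).choose σ : ℝ) * (2⁻¹) ^ k := by
          apply mul_le_mul_of_nonneg_right this (by positivity)
      _ = (2⁻¹) ^ k * ((2 * σ).choose σ : ℝ) := mul_comm _ _
end

section
/- For a uniformly random bridge b of length σ, P(b(σ) = −k) converges to 2^{−k−1} as σ → ∞, for each fixed integer k ≥ 0. -/
/-!
Raising every increment by one identifies a bridge of length `σ` with a tuple `y : Fin σ → ℕ`
of sum at most `σ`, the endpoint being `∑ y - σ`. By stars and bars there are `C(2σ, σ)`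
bridges, of which `C(2σ - k - 1, σ - k)` end at `-k`; passing from `k` to `k + 1` multiplies
the latter by `(σ - k) / (2σ - k - 1) → 1/2`.
-/

open Filter Topology

theorem card_tuple_sum_eq (n m : ℕ) :
    Nat.card {y : Fin n → ℕ // ∑ i, y i = m} = (n + m - 1).choose m := by
  have e : Sym (Fin n) m ≃ {y : Fin n → ℕ // ∑ i, y i = m} :=
    Equiv.subtypeEquiv (Multiset.toFinsupp.toEquiv.trans Finsupp.equivFunOnFinite)
      (fun s => by simp [Finsupp.equivFunOnFinite, Multiset.sum_count_eq_card])
  rw [← Nat.card_congr e, Nat.card_eq_fintype_card, Sym.card_sym_eq_choose, Fintype.card_fin]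

def tupleSumLeEquivSumEq (n m : ℕ) :
    {y : Fin n → ℕ // ∑ i, y i ≤ m} ≃ {z : Fin (n + 1) → ℕ // ∑ i, z i = m} where
  toFun y := ⟨Fin.cons (m - ∑ i, y.1 i) y.1, by rw [Fin.sum_cons]; have := y.2; omega⟩
  invFun z := ⟨Fin.tail z.1, by
    have := z.2
    rw [Fin.sum_univ_succ] at this
    simp only [Fin.tail]
    omega⟩
  left_inv y := by simp
  right_inv z := by
    have hz := z.2
    rw [Fin.sum_univ_succ] at hz
    ext i
    refine Fin.cases ?_ (fun i => rfl) i
    simp only [Fin.cons_zero, Fin.tail]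
    omega

theorem card_tuple_sum_le (n m : ℕ) :
    Nat.card {y : Fin n → ℕ // ∑ i, y i ≤ m} = (n + m).choose m := by
  rw [Nat.card_congr (tupleSumLeEquivSumEq n m), card_tuple_sum_eq]
  congr 1; omega

def IsSkipFreePath (σ : ℕ) (b : List ℤ) : Prop :=
  b.length = σ + 1 ∧ b.getD 0 0 = 0 ∧ ∀ i < σ, -1 ≤ b.getD (i + 1) 0 - b.getD i 0

def pathOfSteps {σ : ℕ} (y : Fin σ → ℕ) : List ℤ :=
  (List.ofFn fun i => (y i : ℤ) - 1).scanl (· + ·) 0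

section pathOfSteps

variable {σ : ℕ} (y : Fin σ → ℕ)

theorem length_pathOfSteps : (pathOfSteps y).length = σ + 1 := by
  simp [pathOfSteps]

theorem getD_pathOfSteps_zero : (pathOfSteps y).getD 0 0 = 0 := by
  simp [pathOfSteps]

theorem getD_pathOfSteps_succ {i : ℕ} (hi : i < σ) :
    (pathOfSteps y).getD (i + 1) 0 = (pathOfSteps y).getD i 0 + (y ⟨i, hi⟩ - 1) := by
  unfold pathOfSteps
  rw [List.getD_eq_getElem _ _ (by simpa), List.getD_eq_getElem _ _ (by simp; omega),
    List.getElem_succ_scanl, List.getElem_ofFn]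

theorem getD_pathOfSteps_self : (pathOfSteps y).getD σ 0 = ∑ i, (y i : ℤ) - σ := by
  have := Finset.sum_range_sub (fun i => (pathOfSteps y).getD i 0) σ
  rw [← Fin.sum_univ_eq_sum_range, getD_pathOfSteps_zero, sub_zero] at this
  rw [← this, Finset.sum_congr rfl fun i _ => by
    rw [getD_pathOfSteps_succ y i.2, add_sub_cancel_left]]
  simp

theorem isSkipFreePath_pathOfSteps : IsSkipFreePath σ (pathOfSteps y) :=
  ⟨length_pathOfSteps y, getD_pathOfSteps_zero y, fun i hi => by
    rw [getD_pathOfSteps_succ y hi]; omega⟩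

end pathOfSteps

def skipFreePathEquiv (σ : ℕ) : (Fin σ → ℕ) ≃ {b : List ℤ // IsSkipFreePath σ b} where
  toFun y := ⟨pathOfSteps y, isSkipFreePath_pathOfSteps y⟩
  invFun b i := (b.1.getD (i + 1) 0 - b.1.getD i 0 + 1).toNat
  left_inv y := by
    funext i
    change ((pathOfSteps y).getD (i + 1) 0 - (pathOfSteps y).getD i 0 + 1).toNat = y i
    rw [getD_pathOfSteps_succ y i.2]
    simp
  right_inv := by
    rintro ⟨b, hlen, h0, hstep⟩
    set y : Fin σ → ℕ := fun i => (b.getD (i + 1) 0 - b.getD i 0 + 1).toNat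
    have hpos : ∀ i ≤ σ, (pathOfSteps y).getD i 0 = b.getD i 0 := by
      intro i hi
      induction i with
      | zero => rw [getD_pathOfSteps_zero, h0]
      | succ i ih =>
        have := hstep i hi
        rw [getD_pathOfSteps_succ y hi, ih (by omega)]
        simp only [y, Int.toNat_of_nonneg (by omega : 0 ≤ b.getD (i + 1) 0 - b.getD i 0 + 1)]
        ring
    refine Subtype.ext <| List.ext_getElem (by rw [length_pathOfSteps, hlen]) fun i h₁ h₂ => ?_
    rw [← List.getD_eq_getElem _ 0, ← List.getD_eq_getElem _ 0,
      hpos i (by simpa [hlen] using h₂)]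

theorem card_isSkipFreePath_and (σ : ℕ) (P : ℤ → Prop) :
    Nat.card {b : List ℤ // IsSkipFreePath σ b ∧ P (b.getD σ 0)} =
      Nat.card {y : Fin σ → ℕ // P (∑ i, (y i : ℤ) - σ)} :=
  Nat.card_congr <| (Equiv.subtypeSubtypeEquivSubtypeInter _ (fun b => P (b.getD σ 0))).symm.trans
    ((skipFreePathEquiv σ).subtypeEquiv fun y =>
      iff_of_eq (congrArg P (getD_pathOfSteps_self y).symm)).symm

theorem isBridge_iff {σ : ℕ} {b : List ℤ} :
    IsBridge σ b ↔ IsSkipFreePath σ b ∧ b.getD σ 0 ≤ 0 := by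
  simp only [IsBridge, IsSkipFreePath, and_assoc]

theorem card_bridge (σ : ℕ) : Nat.card {b : List ℤ // IsBridge σ b} = (2 * σ).choose σ := by
  rw [Nat.card_congr (Equiv.subtypeEquivRight fun b => isBridge_iff),
    card_isSkipFreePath_and σ (· ≤ 0), two_mul, ← card_tuple_sum_le]
  exact Nat.card_congr <| Equiv.subtypeEquivRight fun y => by rw [← Nat.cast_sum]; omega

theorem card_bridge_endpoint {σ k : ℕ} (hk : k ≤ σ) :
    Nat.card {b : List ℤ // IsBridge σ b ∧ b.getD σ 0 = -(k : ℤ)} =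
      (2 * σ - k - 1).choose (σ - k) := by
  have hbridge (b : List ℤ) : IsBridge σ b ∧ b.getD σ 0 = -(k : ℤ) ↔
      IsSkipFreePath σ b ∧ b.getD σ 0 = -(k : ℤ) := by
    rw [isBridge_iff, and_assoc]
    exact and_congr_right fun _ => ⟨And.right, fun h => ⟨by omega, h⟩⟩
  rw [Nat.card_congr (Equiv.subtypeEquivRight hbridge),
    card_isSkipFreePath_and σ (· = -(k : ℤ)),
    show 2 * σ - k - 1 = σ + (σ - k) - 1 by omega, ← card_tuple_sum_eq]
  exact Nat.card_congr <| Equiv.subtypeEquivRight fun y => by rw [← Nat.cast_sum]; omega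

theorem cast_choose_pred_pred {K : Type*} [Field K] [CharZero K] {n r : ℕ} (hn : 0 < n)
    (hr : 0 < r) : ((n - 1).choose (r - 1) : K) = n.choose r * (r / n) := by
  have h := Nat.add_one_mul_choose_eq (n - 1) (r - 1)
  rw [Nat.sub_add_cancel hn, Nat.sub_add_cancel hr] at h
  rw [mul_div, eq_div_iff (Nat.cast_ne_zero.mpr hn.ne'), mul_comm]
  exact_mod_cast h

theorem tendsto_choose_div_choose_two_mul (k : ℕ) :
    Tendsto (fun σ : ℕ => ((2 * σ - k - 1).choose (σ - k) : ℝ) / (2 * σ).choose σ) atTop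
      (𝓝 (2⁻¹ ^ (k + 1))) := by
  induction k with
  | zero =>
    refine tendsto_const_nhds.congr' ?_
    filter_upwards [eventually_gt_atTop 0] with σ hσ
    have hsymm : (2 * σ - 1).choose σ = (2 * σ - 1).choose (σ - 1) :=
      Nat.choose_symm_of_eq_add (by omega)
    have hpos : (0 : ℝ) < (2 * σ).choose σ := by exact_mod_cast Nat.choose_pos (by omega)
    rw [Nat.sub_zero, Nat.sub_zero, hsymm, cast_choose_pred_pred (by omega) hσ]
    field_simp
    push_cast
    ring
  | succ k ih =>
    have hstep : ∀ᶠ σ : ℕ in atTop,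
        ((2 * σ - k - 1).choose (σ - k) : ℝ) / (2 * σ).choose σ *
            ((-k + 1 * σ) / (-(k + 1) + 2 * σ)) =
          ((2 * σ - (k + 1) - 1).choose (σ - (k + 1)) : ℝ) / (2 * σ).choose σ := by
      filter_upwards [eventually_gt_atTop k] with σ hσ
      rw [show 2 * σ - (k + 1) - 1 = 2 * σ - k - 1 - 1 by omega,
        show σ - (k + 1) = σ - k - 1 by omega, cast_choose_pred_pred (by omega) (by omega),
        Nat.cast_sub (by omega), Nat.cast_sub (by omega), Nat.cast_sub (by omega)]
      push_cast
      ring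
    have hprod :=
      ih.mul (tendsto_add_mul_div_add_mul_atTop_nhds (-k : ℝ) (-(k + 1)) 1 two_ne_zero)
    rw [one_div, ← pow_succ] at hprod
    exact hprod.congr' hstep

/-- For a uniformly random bridge of length `σ`, the probability that `b σ = -k` converges,
as `σ → ∞`, to `2^{-k-1}`, for each fixed `k ≥ 0`. -/
theorem prob_bridge_endpoint_limit (k : ℕ) :
    Tendsto (fun σ : ℕ =>
        (Nat.card {b : List ℤ // IsBridge σ b ∧ b.getD σ 0 = -(k : ℤ)} : ℝ) /
          (Nat.card {b : List ℤ // IsBridge σ b} : ℝ))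
      atTop (nhds ((2 : ℝ)⁻¹ ^ (k + 1))) := by
  refine (tendsto_choose_div_choose_two_mul k).congr' ?_
  filter_upwards [eventually_ge_atTop k] with σ hσ
  rw [card_bridge_endpoint hσ, card_bridge]
end

section
/- Kemperman's formula: if (S_i)_{i≥0} is a simple random walk on ℤ started at 0 (i.i.d. increments uniform on {−1,+1}), and T_j = inf{i ≥ 0 : S_i = j} denotes the first hitting time of j ∈ ℤ, then for every j ∈ ℤ \ {0} and k ∈ ℕ, P(T_j = k) = (|j|/k) · P(S_k = j). -/
/-- Partial sum of the first `m` increments of a walk with increment sequence `ε : Fin k → ℤ`. -/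
def walkSum (k : ℕ) (ε : Fin k → ℤ) (m : ℕ) : ℤ :=
  ∑ i : Fin k, if (i : ℕ) < m then ε i else 0

/-!
Extend the increments `ε` of a walk with `S_k = j > 0` periodically, so that the extended walk
satisfies `W (n + k) = W n + j`. The rotation of `ε` starting at `t` is a first passage to `j` at
time `k` iff `t + k` is a strict record time of `W`. As `W` moves up by at most one per step, its
strict records in `[k, 2k)` are the first visits to the `j` levels above `max_{n<k} W n`, so exactly
`j` of the `k` rotations are first passages (the cycle lemma). Double counting pairs of a walk and
a rotation gives `k · #{T_j = k} = j · #{S_k = j}`; negative `j` follows by reflection.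
-/

open Finset

section Records

variable {f : ℕ → ℤ}

def runMax (f : ℕ → ℤ) : ℕ → ℤ
  | 0 => f 0
  | n + 1 => max (runMax f n) (f (n + 1))

theorem runMax_lt_iff {n : ℕ} {x : ℤ} : runMax f n < x ↔ ∀ u < n + 1, f u < x := by
  induction n with
  | zero => simp [runMax]
  | succ n ih => rw [runMax, max_lt_iff, ih, Nat.forall_lt_succ_right (n := n + 1)]

theorem runMax_le_iff {n : ℕ} {x : ℤ} : runMax f n ≤ x ↔ ∀ u < n + 1, f u ≤ x := by
  induction n with
  | zero => simp [runMax]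
  | succ n ih => rw [runMax, max_le_iff, ih, Nat.forall_lt_succ_right (n := n + 1)]

theorem le_runMax {u n : ℕ} (hu : u ≤ n) : f u ≤ runMax f n :=
  runMax_le_iff.mp le_rfl u (Nat.lt_succ_of_le hu)

theorem runMax_succ (hstep : ∀ n, f (n + 1) ≤ f n + 1) (n : ℕ) :
    runMax f (n + 1) = runMax f n + if ∀ u < n + 1, f u < f (n + 1) then 1 else 0 := by
  rw [runMax]
  split_ifs with hrec
  · have hlt := runMax_lt_iff.mpr hrec
    have := hstep n
    have := le_runMax (f := f) (le_refl n)
    rw [max_eq_right hlt.le]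
    omega
  · rw [← runMax_lt_iff, not_lt] at hrec
    rw [max_eq_left hrec, add_zero]

theorem card_records_Ioc_eq_runMax_sub (hstep : ∀ n, f (n + 1) ≤ f n + 1) {a b : ℕ} (hab : a ≤ b) :
    (#{s ∈ Ioc a b | ∀ u < s, f u < f s} : ℤ) = runMax f b - runMax f a := by
  induction b, hab using Nat.le_induction with
  | base => simp
  | succ b hab ih =>
    rw [card_filter, sum_Ioc_succ_top hab, ← card_filter, runMax_succ hstep]
    push_cast [ih]
    split_ifs <;> ring

theorem runMax_add_period {k : ℕ} {j : ℤ} (hper : ∀ n, f (n + k) = f n + j) (hj : 0 ≤ j)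
    {n : ℕ} (hn : k ≤ n + 1) : runMax f (n + k) = runMax f n + j := by
  apply le_antisymm
  · refine runMax_le_iff.mpr fun u hu => ?_
    rcases lt_or_ge u k with huk | huk
    · linarith [le_runMax (f := f) (show u ≤ n by omega)]
    · have := hper (u - k)
      rw [Nat.sub_add_cancel huk] at this
      linarith [le_runMax (f := f) (show u - k ≤ n by omega)]
  · rw [← le_sub_iff_add_le, runMax_le_iff]
    intro u hu
    linarith [hper u, le_runMax (f := f) (show u + k ≤ n + k by omega)]

theorem forall_lt_iff_forall_lt_window {k : ℕ} (hk : 0 < k) (hmono : ∀ n, f n ≤ f (n + k))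
    (t : ℕ) : (∀ u < t + k, f u < f (t + k)) ↔ ∀ m < k, f (t + m) < f (t + k) := by
  refine ⟨fun h m hm => h _ (by omega), fun h => ?_⟩
  suffices ∀ r u, t ≤ u + r * k → u < t + k → f u < f (t + k) from
    fun u => this t u (by nlinarith)
  intro r
  induction r with
  | zero =>
    intro u htu hu
    simpa [Nat.add_sub_cancel' (show t ≤ u by simpa using htu)] using h (u - t) (by omega)
  | succ r ih =>
    intro u htu hu
    rcases le_or_gt t u with htu' | htu'
    · exact ih u (by nlinarith) hu
    · exact (hmono u).trans_lt (ih (u + k) (by linarith [add_mul r 1 k]) (by omega))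

theorem forall_lt_of_forall_ne (hstep : ∀ n, f (n + 1) ≤ f n + 1) {t n : ℕ} {v : ℤ}
    (h0 : f t < v) (hne : ∀ m < n, f (t + m) ≠ v) : ∀ m < n, f (t + m) < v := by
  intro m
  induction m with
  | zero => simpa using fun _ => h0
  | succ m ih =>
    intro hm
    have hlt := ih (by omega)
    have hstep' := hstep (t + m)
    have hne' := hne (m + 1) hm
    rw [← add_assoc] at hne' ⊢
    omega

theorem card_filter_forall_lt_add_period {k : ℕ} {j : ℤ} (hk : 0 < k) (hj : 0 ≤ j)
    (hstep : ∀ n, f (n + 1) ≤ f n + 1) (hper : ∀ n, f (n + k) = f n + j) :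
    (#{t ∈ range k | ∀ m < k, f (t + m) < f (t + k)} : ℤ) = j := by
  have hmono : ∀ n, f n ≤ f (n + k) := fun n => by linarith [hper n]
  have hshift : #{t ∈ range k | ∀ m < k, f (t + m) < f (t + k)} =
      #{s ∈ Ioc (k - 1) (k - 1 + k) | ∀ u < s, f u < f s} := by
    refine card_nbij' (· + k) (· - k) ?_ ?_ ?_ ?_
    · intro t ht
      simp only [mem_coe, mem_filter, mem_range, mem_Ioc] at ht ⊢
      exact ⟨by omega, (forall_lt_iff_forall_lt_window hk hmono t).mpr ht.2⟩
    · intro s hs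
      simp only [mem_coe, mem_filter, mem_range, mem_Ioc] at hs ⊢
      have hrec := (forall_lt_iff_forall_lt_window hk hmono (s - k)).mp
      rw [Nat.sub_add_cancel (by omega)] at hrec ⊢
      exact ⟨by omega, hrec hs.2⟩
    · intro t _
      simp
    · intro s hs
      simp only [mem_coe, mem_filter, mem_Ioc] at hs
      simp only
      omega
  rw [hshift, card_records_Ioc_eq_runMax_sub hstep (by omega), runMax_add_period hper hj (by omega)]
  ring

end Records

section Walks

open Fin.NatCast

variable {k : ℕ}

def signSeqs (k : ℕ) : Finset (Fin k → ℤ) :=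
  Fintype.piFinset fun _ => {1, -1}

theorem mem_signSeqs {ε : Fin k → ℤ} : ε ∈ signSeqs k ↔ ∀ i, ε i = 1 ∨ ε i = -1 := by
  simp [signSeqs]

theorem natCard_subtype_eq_card_filter_signSeqs (P : (Fin k → ℤ) → Prop) [DecidablePred P] :
    Nat.card {ε : Fin k → ℤ // (∀ i, ε i = 1 ∨ ε i = -1) ∧ P ε} = #{ε ∈ signSeqs k | P ε} := by
  rw [← Nat.card_eq_finsetCard]
  exact Nat.card_congr (Equiv.subtypeEquivRight fun ε => by simp [mem_signSeqs])

theorem walkSum_neg (ε : Fin k → ℤ) (m : ℕ) : walkSum k (-ε) m = -walkSum k ε m := by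
  simp only [walkSum, ← sum_neg_distrib, Pi.neg_apply, neg_ite, neg_zero]

def rotate (t : Fin k) (ε : Fin k → ℤ) : Fin k → ℤ :=
  fun i => ε (i + t)

theorem rotate_rotate (s t : Fin k) (ε : Fin k → ℤ) : rotate s (rotate t ε) = rotate (s + t) ε :=
  funext fun i => congrArg ε (add_assoc i s t)

theorem rotate_mem_signSeqs {ε : Fin k → ℤ} (hε : ε ∈ signSeqs k) (t : Fin k) :
    rotate t ε ∈ signSeqs k :=
  mem_signSeqs.mpr fun i => mem_signSeqs.mp hε (i + t)

variable [NeZero k]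

def periodicWalk (ε : Fin k → ℤ) (n : ℕ) : ℤ :=
  ∑ i ∈ range n, ε (i : Fin k)

@[simp]
theorem rotate_zero (ε : Fin k → ℤ) : rotate 0 ε = ε :=
  funext fun i => congrArg ε (add_zero i)

theorem walkSum_eq_periodicWalk (ε : Fin k → ℤ) {m : ℕ} (hm : m ≤ k) :
    walkSum k ε m = periodicWalk ε m := by
  have hrange : {i ∈ range k | i < m} = range m := by
    ext i
    simp only [mem_filter, mem_range]
    omega
  rw [walkSum, periodicWalk, ← hrange, sum_filter]
  simpa only [Fin.cast_val_eq_self] using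
    Fin.sum_univ_eq_sum_range (fun i => if i < m then ε (i : Fin k) else 0) k

theorem periodicWalk_succ (ε : Fin k → ℤ) (n : ℕ) :
    periodicWalk ε (n + 1) = periodicWalk ε n + ε (n : Fin k) :=
  sum_range_succ _ _

theorem periodicWalk_rotate (ε : Fin k → ℤ) (t m : ℕ) :
    periodicWalk (rotate (t : Fin k) ε) m = periodicWalk ε (t + m) - periodicWalk ε t := by
  simp [periodicWalk, rotate, sum_range_add, add_comm]

theorem periodicWalk_add_period (ε : Fin k → ℤ) (n : ℕ) :
    periodicWalk ε (n + k) = periodicWalk ε n + periodicWalk ε k := by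
  have := periodicWalk_rotate ε k n
  rw [Fin.natCast_self, rotate_zero] at this
  rw [add_comm n]
  linarith

theorem walkSum_rotate_self (t : Fin k) (ε : Fin k → ℤ) :
    walkSum k (rotate t ε) k = walkSum k ε k := by
  rw [walkSum_eq_periodicWalk _ le_rfl, walkSum_eq_periodicWalk _ le_rfl, ← Fin.cast_val_eq_self t,
    periodicWalk_rotate, periodicWalk_add_period, add_sub_cancel_left]

theorem periodicWalk_succ_le {ε : Fin k → ℤ} (hε : ε ∈ signSeqs k) (n : ℕ) :
    periodicWalk ε (n + 1) ≤ periodicWalk ε n + 1 := by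
  rw [periodicWalk_succ]
  rcases mem_signSeqs.mp hε n with h | h <;> linarith

theorem rotate_firstPassage_iff {j : ℤ} (hj : 0 < j) {ε : Fin k → ℤ} (hε : ε ∈ signSeqs k)
    (hεj : walkSum k ε k = j) (t : ℕ) :
    (walkSum k (rotate t ε) k = j ∧ ∀ m < k, walkSum k (rotate t ε) m ≠ j) ↔
      ∀ m < k, periodicWalk ε (t + m) < periodicWalk ε (t + k) := by
  have hrot : ∀ m ≤ k, walkSum k (rotate t ε) m = periodicWalk ε (t + m) - periodicWalk ε t :=
    fun m hm => by rw [walkSum_eq_periodicWalk _ hm, periodicWalk_rotate]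
  have hend : periodicWalk ε (t + k) = periodicWalk ε t + j := by
    rw [periodicWalk_add_period, ← walkSum_eq_periodicWalk ε le_rfl, hεj]
  rw [hrot k le_rfl, hend, add_sub_cancel_left, eq_self, true_and]
  constructor
  · intro hne
    refine forall_lt_of_forall_ne (periodicWalk_succ_le hε) (by linarith) fun m hm => ?_
    have := hne m hm
    rw [hrot m hm.le] at this
    omega
  · intro hlt m hm
    have := hlt m hm
    rw [hrot m hm.le]
    omega

theorem mul_card_firstPassage_eq {j : ℤ} (hj : 0 < j) :
    k * #{ε ∈ signSeqs k | walkSum k ε k = j ∧ ∀ m < k, walkSum k ε m ≠ j} =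
      #{ε ∈ signSeqs k | walkSum k ε k = j} * j.natAbs := by
  set F := {ε ∈ signSeqs k | walkSum k ε k = j ∧ ∀ m < k, walkSum k ε m ≠ j}
  set A := {ε ∈ signSeqs k | walkSum k ε k = j}
  have hdouble := card_mul_eq_card_mul
    (fun t ε => ∀ m < k, periodicWalk ε (t + m) < periodicWalk ε (t + k))
    (s := range k) (t := A) (m := #F) (n := j.natAbs) ?_ ?_
  · rwa [card_range] at hdouble
  · intro t _
    refine card_nbij' (rotate t) (rotate (-t : Fin k)) ?_ ?_ ?_ ?_
    · intro ε hε
      simp only [A, F, mem_coe, mem_bipartiteAbove, mem_filter] at hε ⊢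
      exact ⟨rotate_mem_signSeqs hε.1.1 t, (rotate_firstPassage_iff hj hε.1.1 hε.1.2 t).mpr hε.2⟩
    · intro c hc
      simp only [A, F, mem_coe, mem_bipartiteAbove, mem_filter] at hc ⊢
      have hε := rotate_mem_signSeqs hc.1 (-t : Fin k)
      have hεj : walkSum k (rotate (-t : Fin k) c) k = j := by rw [walkSum_rotate_self, hc.2.1]
      have hct : rotate t (rotate (-t : Fin k) c) = c := by
        rw [rotate_rotate, add_neg_cancel, rotate_zero]
      exact ⟨⟨hε, hεj⟩, (rotate_firstPassage_iff hj hε hεj t).mp (by rw [hct]; exact hc.2)⟩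
    · intro ε _
      rw [rotate_rotate, neg_add_cancel, rotate_zero]
    · intro c _
      rw [rotate_rotate, add_neg_cancel, rotate_zero]
  · intro ε hε
    simp only [A, mem_filter] at hε
    have hper : ∀ n, periodicWalk ε (n + k) = periodicWalk ε n + j := fun n => by
      rw [periodicWalk_add_period, ← walkSum_eq_periodicWalk ε le_rfl, hε.2]
    have := card_filter_forall_lt_add_period (NeZero.pos k) hj.le (periodicWalk_succ_le hε.1) hper
    simp only [bipartiteBelow]
    omega

end Walks

theorem mul_natCard_firstPassage_eq {k : ℕ} (hk : 0 < k) {j : ℤ} (hj : j ≠ 0) :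
    k * Nat.card {ε : Fin k → ℤ //
        (∀ i, ε i = 1 ∨ ε i = -1) ∧ walkSum k ε k = j ∧ ∀ m < k, walkSum k ε m ≠ j} =
      Nat.card {ε : Fin k → ℤ // (∀ i, ε i = 1 ∨ ε i = -1) ∧ walkSum k ε k = j} * j.natAbs := by
  wlog hpos : 0 < j generalizing j
  · have hreflect := this (neg_ne_zero.mpr hj) (by omega)
    rw [Int.natAbs_neg] at hreflect
    convert hreflect using 2 <;> exact Nat.card_congr <| .subtypeEquiv (.neg _) fun ε => by
      simp [walkSum_neg, neg_eq_iff_eq_neg, or_comm]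
  have : NeZero k := ⟨hk.ne'⟩
  rw [natCard_subtype_eq_card_filter_signSeqs
      (fun ε => walkSum k ε k = j ∧ ∀ m < k, walkSum k ε m ≠ j),
    natCard_subtype_eq_card_filter_signSeqs (fun ε => walkSum k ε k = j),
    mul_card_firstPassage_eq hpos]

/-- **Kemperman's formula.** For simple random walk started at `0` (increments uniform on
`{-1,+1}`, modelled by counting increment sequences), for every `j ≠ 0` and `k ≥ 1`,
`P(T_j = k) = (|j|/k) · P(S_k = j)`, where `T_j` is the first hitting time of `j`. -/
theorem kemperman (j : ℤ) (hj : j ≠ 0) (k : ℕ) (hk : 0 < k) :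
    (Nat.card {ε : Fin k → ℤ //
        (∀ i, ε i = 1 ∨ ε i = -1) ∧ walkSum k ε k = j ∧ ∀ m < k, walkSum k ε m ≠ j} : ℝ)
        / 2 ^ k
      = |(j : ℝ)| / k *
        ((Nat.card {ε : Fin k → ℤ // (∀ i, ε i = 1 ∨ ε i = -1) ∧ walkSum k ε k = j} : ℝ)
          / 2 ^ k) := by
  have hcount := congrArg (Nat.cast : ℕ → ℝ) (mul_natCard_firstPassage_eq hk hj)
  push_cast [Nat.cast_natAbs, Int.cast_abs] at hcount
  have hk' : (k : ℝ) ≠ 0 := by positivity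
  field_simp
  linear_combination hcount
end

section
/- Let (E,d,ρ) and (E',d',ρ') be pointed complete, locally compact length spaces, fix r ≥ 0, and let R ⊆ E × E' satisfy: (ρ,ρ') ∈ R; for every x in the closed ball B_r(E) around ρ there exists x' ∈ E' with (x,x') ∈ R; and for every y' ∈ B_r(E') there exists y ∈ E with (y,y') ∈ R. Then the pointed Gromov–Hausdorff distance between B_r(E) and B_r(E') is at most (3/2)·dis(R), where dis(R) = sup{|d(x,y) − d'(x',y')| : (x,x'),(y,y') ∈ R}. -/
open Metric
open scoped ENNReal

/-- The distortion of a relation `R ⊆ E × E'` between two metric spaces: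
`sup {|d(x,y) - d'(x',y')| : (x,x'), (y,y') ∈ R}` (valued in `ℝ≥0∞`). -/
noncomputable def relDistortion {E E' : Type*} [MetricSpace E] [MetricSpace E']
    (R : Set (E × E')) : ℝ≥0∞ :=
  ⨆ (p : R) (q : R), ENNReal.ofReal |dist p.1.1 q.1.1 - dist p.1.2 q.1.2|

/-- The pointed Gromov–Hausdorff distance between pointed metric spaces, defined as half the
infimum of distortions over all correspondences containing the pair of distinguished points. -/
noncomputable def pGHDist (X : Type*) (Y : Type*) [MetricSpace X] [MetricSpace Y]
    (x : X) (y : Y) : ℝ≥0∞ :=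
  (1 / 2) * ⨅ (R : Set (X × Y)) (_ : (x, y) ∈ R) (_ : ∀ a : X, ∃ b : Y, (a, b) ∈ R)
      (_ : ∀ b : Y, ∃ a : X, (a, b) ∈ R), relDistortion R

/-- A metric space is a length space if the distance between any two points is the infimum of
the lengths (total variations) of continuous paths joining them. -/
def IsLengthSpace (E : Type*) [MetricSpace E] : Prop :=
  ∀ x y : E, ENNReal.ofReal (dist x y) = ⨅ γ : Path x y, eVariationOn (⇑γ) Set.univ

/-!
Thicken `R` into a correspondence between the balls. A point `x ∈ B_r(E)` has an `R`-partner `x'`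
with `d'(ρ', x') ≤ r + dis R`; following a path from `ρ'` to `x'` of length at most
`d'(ρ', x') + δ` up to the point where it is at distance exactly `r` from `ρ'` gives a partner
in `B_r(E')` within `dis R + δ` of `x'`, and symmetrically. Moving one coordinate of a pair of `R`
by at most `dis R + δ` raises the distortion by at most twice that, so the new correspondence
has distortion at most `3 dis R + 2 δ`; then let `δ → 0`.
-/

open Set unitInterval

theorem Path.edist_add_edist_le_eVariationOn {F : Type*} [PseudoEMetricSpace F] {x y : F}
    (γ : Path x y) (t : I) : edist x (γ t) + edist (γ t) y ≤ eVariationOn γ univ := by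
  calc edist x (γ t) + edist (γ t) y = edist (γ 0) (γ t) + edist (γ t) (γ 1) := by simp
    _ ≤ eVariationOn γ (univ ∩ Icc 0 t) + eVariationOn γ (univ ∩ Icc t 1) := by
      gcongr <;> exact eVariationOn.edist_le _ (by simp [le_one']) (by simp [le_one'])
    _ = eVariationOn γ univ := by
      rw [eVariationOn.Icc_add_Icc _ nonneg' le_one' (mem_univ t), univ_inter]
      exact congrArg _ (eq_univ_of_forall fun _ ↦ ⟨nonneg', le_one'⟩)

theorem IsLengthSpace.exists_mem_closedBall_dist_le {F : Type*} [MetricSpace F]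
    (hF : IsLengthSpace F) {ρ x : F} {r c δ : ℝ} (hr : 0 ≤ r) (hc : 0 ≤ c) (hδ : 0 < δ)
    (hx : dist ρ x ≤ r + c) : ∃ z ∈ closedBall ρ r, dist z x ≤ c + δ := by
  by_cases hxr : dist ρ x ≤ r
  · exact ⟨x, mem_closedBall'.2 hxr, by rw [dist_self]; linarith⟩
  obtain ⟨γ, hγ⟩ : ∃ γ : Path ρ x, eVariationOn γ univ < ENNReal.ofReal (dist ρ x + δ) := by
    rw [← iInf_lt_iff, ← hF]
    exact ENNReal.ofReal_lt_ofReal_iff'.2 ⟨by linarith, by positivity⟩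
  obtain ⟨t, ht⟩ : r ∈ range fun t ↦ dist ρ (γ t) :=
    intermediate_value_univ 0 1 (by fun_prop) (by simpa using ⟨hr, (not_le.1 hxr).le⟩)
  refine ⟨γ t, mem_closedBall'.2 ht.le, ?_⟩
  have hlen : ENNReal.ofReal (r + dist (γ t) x) < ENNReal.ofReal (dist ρ x + δ) := by
    rw [ENNReal.ofReal_add hr dist_nonneg, ← ht, ← edist_dist, ← edist_dist]
    exact (γ.edist_add_edist_le_eVariationOn t).trans_lt hγ
  have := (ENNReal.ofReal_lt_ofReal_iff'.1 hlen).1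
  linarith

section Correspondence

variable {E E' : Type*} [MetricSpace E] [MetricSpace E']

theorem relDistortion_le_iff {R : Set (E × E')} {K : ℝ≥0∞} :
    relDistortion R ≤ K ↔
      ∀ p ∈ R, ∀ q ∈ R, ENNReal.ofReal |dist p.1 q.1 - dist p.2 q.2| ≤ K := by
  simp only [relDistortion, iSup_le_iff, Subtype.forall]

theorem abs_dist_sub_dist_le_of_relDistortion_le {R : Set (E × E')} {ε : ℝ} (hε₀ : 0 ≤ ε)
    (hε : relDistortion R ≤ ENNReal.ofReal ε) {p q : E × E'} (hp : p ∈ R) (hq : q ∈ R) :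
    |dist p.1 q.1 - dist p.2 q.2| ≤ ε :=
  (ENNReal.ofReal_le_ofReal_iff hε₀).1 (relDistortion_le_iff.1 hε p hp q hq)

theorem relDistortion_preimage_prodMap_le {X Y : Type*} [MetricSpace X] [MetricSpace Y]
    {f : X → E} {g : Y → E'} (hf : Isometry f) (hg : Isometry g) (R : Set (E × E')) :
    relDistortion (Prod.map f g ⁻¹' R) ≤ relDistortion R := by
  rw [relDistortion_le_iff]
  intro p hp q hq
  rw [← hf.dist_eq, ← hg.dist_eq]
  exact relDistortion_le_iff.1 le_rfl (f p.1, g p.2) hp (f q.1, g q.2) hq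

/-- Measuring the displacement by the sum, not the maximum, of the two coordinate distances is
what keeps the growth of the distortion down to `2 c`. -/
def relThickening (R : Set (E × E')) (c : ℝ) : Set (E × E') :=
  {p | ∃ q ∈ R, dist p.1 q.1 + dist p.2 q.2 ≤ c}

theorem relDistortion_relThickening_le (R : Set (E × E')) (c : ℝ) :
    relDistortion (relThickening R c) ≤ relDistortion R + ENNReal.ofReal (2 * c) := by
  rw [relDistortion_le_iff]
  rintro p ⟨p₀, hp₀, hp⟩ q ⟨q₀, hq₀, hq⟩
  have key : |dist p.1 q.1 - dist p.2 q.2| ≤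
      |dist p₀.1 q₀.1 - dist p₀.2 q₀.2| + 2 * c := by
    have h₁ : |dist p.1 q.1 - dist p₀.1 q₀.1| ≤ dist p.1 p₀.1 + dist q.1 q₀.1 := by
      simpa [Real.dist_eq] using dist_dist_dist_le p.1 q.1 p₀.1 q₀.1
    have h₂ : |dist p.2 q.2 - dist p₀.2 q₀.2| ≤ dist p.2 p₀.2 + dist q.2 q₀.2 := by
      simpa [Real.dist_eq] using dist_dist_dist_le p.2 q.2 p₀.2 q₀.2
    have h₀ := abs_le.1 (le_refl |dist p₀.1 q₀.1 - dist p₀.2 q₀.2|)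
    rw [abs_le] at h₁ h₂ ⊢
    constructor <;> linarith
  calc ENNReal.ofReal |dist p.1 q.1 - dist p.2 q.2|
      ≤ ENNReal.ofReal |dist p₀.1 q₀.1 - dist p₀.2 q₀.2| + ENNReal.ofReal (2 * c) :=
        (ENNReal.ofReal_le_ofReal key).trans ENNReal.ofReal_add_le
    _ ≤ relDistortion R + ENNReal.ofReal (2 * c) := by
        gcongr
        exact relDistortion_le_iff.1 le_rfl _ hp₀ _ hq₀

theorem pGHDist_le_half_relDistortion {x : E} {y : E'} (R : Set (E × E')) (hxy : (x, y) ∈ R)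
    (hR₁ : ∀ a : E, ∃ b : E', (a, b) ∈ R) (hR₂ : ∀ b : E', ∃ a : E, (a, b) ∈ R) :
    pGHDist E E' x y ≤ 1 / 2 * relDistortion R := by
  unfold pGHDist
  gcongr
  exact iInf_le_of_le R (iInf_le_of_le hxy (iInf_le_of_le hR₁ (iInf_le_of_le hR₂ le_rfl)))

end Correspondence

theorem pGHDist_closedBall_le_of_relDistortion_le {E E' : Type*} [MetricSpace E] [MetricSpace E']
    (hE : IsLengthSpace E) (hE' : IsLengthSpace E') {r : ℝ} (hr : 0 ≤ r) {ρ : E} {ρ' : E'}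
    {R : Set (E × E')} (hρ : (ρ, ρ') ∈ R)
    (h1 : ∀ x ∈ closedBall ρ r, ∃ x' : E', (x, x') ∈ R)
    (h2 : ∀ y' ∈ closedBall ρ' r, ∃ y : E, (y, y') ∈ R)
    {ε δ : ℝ} (hε₀ : 0 ≤ ε) (hε : relDistortion R ≤ ENNReal.ofReal ε) (hδ : 0 < δ) :
    pGHDist (closedBall ρ r) (closedBall ρ' r)
        ⟨ρ, mem_closedBall_self hr⟩ ⟨ρ', mem_closedBall_self hr⟩
      ≤ ENNReal.ofReal (3 / 2 * ε + δ) := by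
  let S : Set (closedBall ρ r × closedBall ρ' r) :=
    Prod.map (↑) (↑) ⁻¹' relThickening R (ε + δ)
  have hρS : (⟨ρ, mem_closedBall_self hr⟩, ⟨ρ', mem_closedBall_self hr⟩) ∈ S :=
    ⟨(ρ, ρ'), hρ, by simpa using add_nonneg hε₀ hδ.le⟩
  have cover₁ : ∀ x : closedBall ρ r, ∃ y : closedBall ρ' r, (x, y) ∈ S := by
    rintro ⟨x, hx⟩
    obtain ⟨x', hxR⟩ := h1 x hx
    have hdist : |dist ρ x - dist ρ' x'| ≤ ε :=
      abs_dist_sub_dist_le_of_relDistortion_le hε₀ hε hρ hxR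
    obtain ⟨y, hy, hyx'⟩ := hE'.exists_mem_closedBall_dist_le (ρ := ρ') (x := x') hr hε₀ hδ
      (by linarith [abs_le.1 hdist, mem_closedBall'.1 hx])
    exact ⟨⟨y, hy⟩, (x, x'), hxR, by simpa using hyx'⟩
  have cover₂ : ∀ y : closedBall ρ' r, ∃ x : closedBall ρ r, (x, y) ∈ S := by
    rintro ⟨y, hy⟩
    obtain ⟨y', hyR⟩ := h2 y hy
    have hdist : |dist ρ y' - dist ρ' y| ≤ ε :=
      abs_dist_sub_dist_le_of_relDistortion_le hε₀ hε hρ hyR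
    obtain ⟨x, hx, hxy'⟩ := hE.exists_mem_closedBall_dist_le (ρ := ρ) (x := y') hr hε₀ hδ
      (by linarith [abs_le.1 hdist, mem_closedBall'.1 hy])
    exact ⟨⟨x, hx⟩, (y', y), hyR, by simpa using hxy'⟩
  calc _ ≤ 1 / 2 * relDistortion S := pGHDist_le_half_relDistortion S hρS cover₁ cover₂
    _ ≤ 1 / 2 * (ENNReal.ofReal ε + ENNReal.ofReal (2 * (ε + δ))) := by
        gcongr
        calc relDistortion S ≤ relDistortion (relThickening R (ε + δ)) :=
              relDistortion_preimage_prodMap_le isometry_subtype_coe isometry_subtype_coe _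
          _ ≤ _ := (relDistortion_relThickening_le R _).trans (by gcongr)
    _ = ENNReal.ofReal (3 / 2 * ε + δ) := by
        rw [← ENNReal.ofReal_add hε₀ (by positivity), ← ENNReal.ofReal_ofNat 2,
          ← ENNReal.ofReal_one, ← ENNReal.ofReal_div_of_pos two_pos,
          ← ENNReal.ofReal_mul (by norm_num)]
        ring_nf

theorem pGHDist_balls_le_general {E E' : Type*} [MetricSpace E] [MetricSpace E']
    (hE : IsLengthSpace E) (hE' : IsLengthSpace E')
    (r : ℝ) (hr : 0 ≤ r) (ρ : E) (ρ' : E') (R : Set (E × E'))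
    (hρ : (ρ, ρ') ∈ R)
    (h1 : ∀ x ∈ closedBall ρ r, ∃ x' : E', (x, x') ∈ R)
    (h2 : ∀ y' ∈ closedBall ρ' r, ∃ y : E, (y, y') ∈ R) :
    pGHDist (closedBall ρ r) (closedBall ρ' r)
        ⟨ρ, mem_closedBall_self hr⟩ ⟨ρ', mem_closedBall_self hr⟩
      ≤ (3 / 2) * relDistortion R := by
  refine ENNReal.le_of_forall_pos_le_add fun η hη hfin ↦ ?_
  have hD : relDistortion R ≠ ⊤ := by
    rintro hD
    simp [hD] at hfin
  calc _ ≤ ENNReal.ofReal (3 / 2 * (relDistortion R).toReal + η) :=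
        pGHDist_closedBall_le_of_relDistortion_le hE hE' hr hρ h1 h2 ENNReal.toReal_nonneg
          (ENNReal.ofReal_toReal hD).ge hη
    _ = 3 / 2 * relDistortion R + η := by
        rw [ENNReal.ofReal_add (by positivity) η.coe_nonneg, ENNReal.ofReal_mul (by norm_num),
          ENNReal.ofReal_toReal hD, ENNReal.ofReal_coe_nnreal, ENNReal.ofReal_div_of_pos two_pos]
        norm_num

/-- If `(E,d,ρ)`, `(E',d',ρ')` are pointed complete locally compact length spaces, `r ≥ 0`, and
`R ⊆ E × E'` contains `(ρ,ρ')`, covers `B_r(E)` on the left and `B_r(E')` on the right, then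
the pointed Gromov–Hausdorff distance between the closed balls `B_r(E)` and `B_r(E')` is at
most `(3/2)·dis(R)`. -/
theorem pGHDist_balls_le {E E' : Type*} [MetricSpace E] [MetricSpace E']
    [CompleteSpace E] [CompleteSpace E'] [LocallyCompactSpace E] [LocallyCompactSpace E']
    (hE : IsLengthSpace E) (hE' : IsLengthSpace E')
    (r : ℝ) (hr : 0 ≤ r) (ρ : E) (ρ' : E') (R : Set (E × E'))
    (hρ : (ρ, ρ') ∈ R)
    (h1 : ∀ x ∈ closedBall ρ r, ∃ x' : E', (x, x') ∈ R)
    (h2 : ∀ y' ∈ closedBall ρ' r, ∃ y : E, (y, y') ∈ R) :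
    pGHDist (closedBall ρ r) (closedBall ρ' r)
        ⟨ρ, mem_closedBall_self hr⟩ ⟨ρ', mem_closedBall_self hr⟩
      ≤ (3 / 2) * relDistortion R :=
  pGHDist_balls_le_general hE hE' r hr ρ ρ' R hρ h1 h2
end
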